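/- Let μ, ε ∈ {−1,1}, let U ⊆ ℝ³ be open (coordinates indexed by 0,1,2, where the 0-th coordinate plays the role of time and ∂_m denotes the partial derivative in the m-th coordinate), let s : U → ℝ³ be C² and v, w : U → ℝ³ be C¹, satisfying at every point of U: s ·_μ s = μ, v ·_μ v = 1, v ·_μ s = 0, and w = s ×_μ v. Define ψ_m = v ·_μ ∂_m s + i w ·_μ ∂_m s and A_m = w ·_μ ∂_m v for m = 0,1,2. Suppose ζ_1, ζ_2 : U → ℝ are functions such that s satisfies the spin equation ∂_0 s = s ×_μ (∂_1∂_1 s + ε ∂_2∂_2 s) + ζ_2 ∂_1 s − ε ζ_1 ∂_2 s on U. Then on U one has ψ_0 = i(∂_1 ψ_1 + i A_1 ψ_1) + i ε (∂_2 ψ_2 + i A_2 ψ_2) + ζ_2 ψ_1 − ε ζ_1 ψ_2. -/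

import Mathlib

noncomputable section

/-- The inner product `v ·_μ w = μ v₀ w₀ + v₁ w₁ + v₂ w₂` on `ℝ³`. -/
def mdot (μ : ℝ) (v w : Fin 3 → ℝ) : ℝ :=
  μ * v 0 * w 0 + v 1 * w 1 + v 2 * w 2

/-- The standard cross product on `ℝ³`. -/
def cross3 (v w : Fin 3 → ℝ) : Fin 3 → ℝ :=
  ![v 1 * w 2 - v 2 * w 1, v 2 * w 0 - v 0 * w 2, v 0 * w 1 - v 1 * w 0]

/-- The cross product `v ×_μ w = η_μ · (v × w)`, where `η_μ = diag(μ,1,1)`. -/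
def mcross (μ : ℝ) (v w : Fin 3 → ℝ) : Fin 3 → ℝ :=
  ![μ * cross3 v w 0, cross3 v w 1, cross3 v w 2]

/-- Partial derivative in the `m`-th coordinate of an `ℝ³`-valued map on `ℝ³`. -/
def pdV (m : Fin 3) (f : (Fin 3 → ℝ) → (Fin 3 → ℝ)) (x : Fin 3 → ℝ) : Fin 3 → ℝ :=
  fderiv ℝ f x (Pi.single m 1)

/-- Partial derivative in the `m`-th coordinate of a `ℂ`-valued map on `ℝ³`. -/
def pdC (m : Fin 3) (f : (Fin 3 → ℝ) → ℂ) (x : Fin 3 → ℝ) : ℂ :=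
  fderiv ℝ f x (Pi.single m 1)

/-!
In the frame `(s, v, w)`, `ψ_m = v ·_μ ∂_m s + i w ·_μ ∂_m s` is the complex coordinate of
`∂_m s` in the plane `s^⊥` (note `s ·_μ ∂_m s = 0`), and `s ×_μ -` acts on that plane as
multiplication by `i`. Differentiating the frame relations gives
`∂_m v ·_μ ∂_m s = A_m (w ·_μ ∂_m s)` and `∂_m w ·_μ ∂_m s = -A_m (v ·_μ ∂_m s)`, so the covariant
derivative `∂_m ψ_m + i A_m ψ_m` is the complex coordinate of `∂_m ∂_m s`. Taking complex
coordinates of both sides of the spin equation then gives the claim.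
-/

open Filter Topology

lemma mdot_comm (μ : ℝ) (u v : Fin 3 → ℝ) : mdot μ u v = mdot μ v u := by
  unfold mdot; ring

lemma mdot_add_right (μ : ℝ) (u p q : Fin 3 → ℝ) :
    mdot μ u (p + q) = mdot μ u p + mdot μ u q := by
  simp only [mdot, Pi.add_apply]; ring

lemma mdot_sub_right (μ : ℝ) (u p q : Fin 3 → ℝ) :
    mdot μ u (p - q) = mdot μ u p - mdot μ u q := by
  simp only [mdot, Pi.sub_apply]; ring

lemma mdot_smul_right (μ r : ℝ) (u p : Fin 3 → ℝ) :
    mdot μ u (r • p) = r * mdot μ u p := by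
  simp only [mdot, Pi.smul_apply, smul_eq_mul]; ring

lemma isBilinearMap_mdot (μ : ℝ) : IsBilinearMap ℝ (mdot μ) where
  add_left u v p := by rw [mdot_comm, mdot_add_right, mdot_comm μ p, mdot_comm μ p]
  smul_left r u p := by rw [mdot_comm, mdot_smul_right, mdot_comm, smul_eq_mul]
  add_right := mdot_add_right μ
  smul_right := mdot_smul_right μ

structure IsFrame (μ : ℝ) (a b : Fin 3 → ℝ) : Prop where
  mdot_self_fst : mdot μ a a = μ
  mdot_self_snd : mdot μ b b = 1
  mdot_snd_fst : mdot μ b a = 0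

section FrameAlgebra

variable {μ : ℝ} {a b : Fin 3 → ℝ}

lemma mdot_mcross_self (hμ : μ ^ 2 = 1) (a b : Fin 3 → ℝ) : mdot μ b (mcross μ a b) = 0 := by
  simp only [mdot, mcross, cross3, Matrix.cons_val_zero, Matrix.cons_val_one,
    Matrix.cons_val_two, Matrix.tail_cons, Matrix.head_cons]
  grind

lemma mdot_mcross_eq_neg_mdot_mcross (hμ : μ ^ 2 = 1) (a b Y : Fin 3 → ℝ) :
    mdot μ b (mcross μ a Y) = -mdot μ (mcross μ a b) Y := by
  simp only [mdot, mcross, cross3, Matrix.cons_val_zero, Matrix.cons_val_one,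
    Matrix.cons_val_two, Matrix.tail_cons, Matrix.head_cons]
  grind

lemma mdot_mcross_mcross (hμ : μ ^ 2 = 1) (ha : mdot μ a a = μ) (hba : mdot μ b a = 0)
    (Y : Fin 3 → ℝ) : mdot μ (mcross μ a b) (mcross μ a Y) = mdot μ b Y := by
  simp only [mdot, mcross, cross3, Matrix.cons_val_zero, Matrix.cons_val_one,
    Matrix.cons_val_two, Matrix.tail_cons, Matrix.head_cons] at ha hba ⊢
  grind

lemma IsFrame.mdot_mcross_mcross_eq_one (hμ : μ ^ 2 = 1) (h : IsFrame μ a b) :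
    mdot μ (mcross μ a b) (mcross μ a b) = 1 := by
  rw [mdot_mcross_mcross hμ h.mdot_self_fst h.mdot_snd_fst, h.mdot_self_snd]

lemma IsFrame.mdot_expand (hμ : μ ^ 2 = 1) (h : IsFrame μ a b) (X Z : Fin 3 → ℝ) :
    mdot μ X Z = μ * mdot μ a X * mdot μ a Z + mdot μ b X * mdot μ b Z
      + mdot μ (mcross μ a b) X * mdot μ (mcross μ a b) Z := by
  obtain ⟨ha, hb, hba⟩ := h
  simp only [mdot, mcross, cross3, Matrix.cons_val_zero, Matrix.cons_val_one,
    Matrix.cons_val_two, Matrix.tail_cons, Matrix.head_cons] at ha hb hba ⊢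
  grind

end FrameAlgebra

def frameCoord (μ : ℝ) (b c Z : Fin 3 → ℝ) : ℂ :=
  (mdot μ b Z : ℂ) + Complex.I * (mdot μ c Z : ℂ)

section FrameCoord

variable {μ : ℝ} {b c : Fin 3 → ℝ}

lemma frameCoord_add (Y Z : Fin 3 → ℝ) :
    frameCoord μ b c (Y + Z) = frameCoord μ b c Y + frameCoord μ b c Z := by
  simp only [frameCoord, mdot_add_right]; push_cast; ring

lemma frameCoord_sub (Y Z : Fin 3 → ℝ) :
    frameCoord μ b c (Y - Z) = frameCoord μ b c Y - frameCoord μ b c Z := by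
  simp only [frameCoord, mdot_sub_right]; push_cast; ring

lemma frameCoord_smul (r : ℝ) (Z : Fin 3 → ℝ) :
    frameCoord μ b c (r • Z) = r * frameCoord μ b c Z := by
  simp only [frameCoord, mdot_smul_right]; push_cast; ring

lemma frameCoord_mcross {a : Fin 3 → ℝ} (hμ : μ ^ 2 = 1) (ha : mdot μ a a = μ)
    (hba : mdot μ b a = 0) (Y : Fin 3 → ℝ) :
    frameCoord μ b (mcross μ a b) (mcross μ a Y)
      = Complex.I * frameCoord μ b (mcross μ a b) Y := by
  rw [frameCoord, frameCoord, mdot_mcross_mcross hμ ha hba, mdot_mcross_eq_neg_mdot_mcross hμ]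
  push_cast
  linear_combination -(mdot μ (mcross μ a b) Y : ℂ) * Complex.I_sq

end FrameCoord

def pd (m : Fin 3) (f : (Fin 3 → ℝ) → ℝ) (x : Fin 3 → ℝ) : ℝ :=
  fderiv ℝ f x (Pi.single m 1)

section Calculus

variable {μ : ℝ} {f g : (Fin 3 → ℝ) → Fin 3 → ℝ} {x : Fin 3 → ℝ}

lemma differentiableAt_mdot (μ : ℝ) (hf : DifferentiableAt ℝ f x)
    (hg : DifferentiableAt ℝ g x) : DifferentiableAt ℝ (fun y => mdot μ (f y) (g y)) x :=
  ((isBilinearMap_mdot μ).toContinuousBilinearMap.hasFDerivAt_of_bilinear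
    hf.hasFDerivAt hg.hasFDerivAt).differentiableAt

lemma pd_mdot (μ : ℝ) (hf : DifferentiableAt ℝ f x) (hg : DifferentiableAt ℝ g x) (m : Fin 3) :
    pd m (fun y => mdot μ (f y) (g y)) x
      = mdot μ (pdV m f x) (g x) + mdot μ (f x) (pdV m g x) := by
  have h : HasFDerivAt (fun y => mdot μ (f y) (g y)) _ x :=
    (isBilinearMap_mdot μ).toContinuousBilinearMap.hasFDerivAt_of_bilinear
      hf.hasFDerivAt hg.hasFDerivAt
  rw [pd, h.fderiv, add_comm]
  rfl

lemma mdot_pdV_add_mdot_pdV_eq_zero {c : ℝ} (hc : ∀ᶠ y in 𝓝 x, mdot μ (f y) (g y) = c)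
    (hf : DifferentiableAt ℝ f x) (hg : DifferentiableAt ℝ g x) (m : Fin 3) :
    mdot μ (pdV m f x) (g x) + mdot μ (f x) (pdV m g x) = 0 := by
  rw [← pd_mdot μ hf hg, pd, Filter.EventuallyEq.fderiv_eq (f₁ := fun y => mdot μ (f y) (g y)) hc,
    fderiv_const_apply, zero_apply]

lemma mdot_pdV_self_eq_zero {c : ℝ} (hc : ∀ᶠ y in 𝓝 x, mdot μ (f y) (f y) = c)
    (hf : DifferentiableAt ℝ f x) (m : Fin 3) : mdot μ (f x) (pdV m f x) = 0 := by
  have h := mdot_pdV_add_mdot_pdV_eq_zero hc hf hf m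
  rw [mdot_comm μ (pdV m f x)] at h
  linarith

lemma pdC_ofReal_add_I_mul {P Q : (Fin 3 → ℝ) → ℝ} (hP : DifferentiableAt ℝ P x)
    (hQ : DifferentiableAt ℝ Q x) (m : Fin 3) :
    pdC m (fun y => (P y : ℂ) + Complex.I * (Q y : ℂ)) x
      = (pd m P x : ℂ) + Complex.I * (pd m Q x : ℂ) := by
  have hre := Complex.ofRealCLM.hasFDerivAt.comp x hP.hasFDerivAt
  have him := Complex.ofRealCLM.hasFDerivAt.comp x hQ.hasFDerivAt
  have h : HasFDerivAt (fun y => (P y : ℂ) + Complex.I * (Q y : ℂ)) _ x :=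
    hre.fun_add (him.const_mul Complex.I)
  rw [pdC, h.fderiv]
  simp [pd]

lemma pdC_frameCoord {v w Z : (Fin 3 → ℝ) → Fin 3 → ℝ} (hv : DifferentiableAt ℝ v x)
    (hw : DifferentiableAt ℝ w x) (hZ : DifferentiableAt ℝ Z x) (m : Fin 3) :
    pdC m (fun y => frameCoord μ (v y) (w y) (Z y)) x
      = frameCoord μ (pdV m v x) (pdV m w x) (Z x) + frameCoord μ (v x) (w x) (pdV m Z x) := by
  simp only [frameCoord]
  rw [pdC_ofReal_add_I_mul (differentiableAt_mdot μ hv hZ) (differentiableAt_mdot μ hw hZ), pd_mdot μ hv hZ, pd_mdot μ hw hZ]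
  push_cast
  ring

lemma differentiableAt_pdV {U : Set (Fin 3 → ℝ)} (hU : IsOpen U) (hf : ContDiffOn ℝ 2 f U)
    (hx : x ∈ U) (m : Fin 3) : DifferentiableAt ℝ (pdV m f) x := by
  have h : ContDiffOn ℝ 1 (pdV m f) U :=
    (hf.fderiv_of_isOpen hU (by norm_num)).clm_apply contDiffOn_const
  exact (h.differentiableOn one_ne_zero).differentiableAt (hU.mem_nhds hx)

end Calculus

theorem pdC_frameCoord_pdV_add_I_mul {μ : ℝ} (hμ : μ ^ 2 = 1)
    {s v w : (Fin 3 → ℝ) → Fin 3 → ℝ} {x : Fin 3 → ℝ}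
    (hframe : ∀ᶠ y in 𝓝 x, IsFrame μ (s y) (v y))
    (hw_eq : ∀ᶠ y in 𝓝 x, w y = mcross μ (s y) (v y))
    (hsx : DifferentiableAt ℝ s x) (hvx : DifferentiableAt ℝ v x)
    (hwx : DifferentiableAt ℝ w x) (m : Fin 3) (hsm : DifferentiableAt ℝ (pdV m s) x) :
    pdC m (fun y => frameCoord μ (v y) (w y) (pdV m s y)) x
        + Complex.I * (mdot μ (w x) (pdV m v x) : ℂ) * frameCoord μ (v x) (w x) (pdV m s x)
      = frameCoord μ (v x) (w x) (pdV m (pdV m s) x) := by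
  have hF := hframe.self_of_nhds
  have hwx_eq : w x = mcross μ (s x) (v x) := hw_eq.self_of_nhds
  have hs_ds : mdot μ (s x) (pdV m s x) = 0 :=
    mdot_pdV_self_eq_zero (hframe.mono fun y hy => hy.mdot_self_fst) hsx m
  have hv_dv : mdot μ (v x) (pdV m v x) = 0 :=
    mdot_pdV_self_eq_zero (hframe.mono fun y hy => hy.mdot_self_snd) hvx m
  have hw_dw : mdot μ (w x) (pdV m w x) = 0 :=
    mdot_pdV_self_eq_zero ((hframe.and hw_eq).mono fun y ⟨hy, hwy⟩ => by
      rw [hwy]; exact hy.mdot_mcross_mcross_eq_one hμ) hwx m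
  have hvw : mdot μ (pdV m v x) (w x) + mdot μ (v x) (pdV m w x) = 0 :=
    mdot_pdV_add_mdot_pdV_eq_zero ((hframe.and hw_eq).mono fun y ⟨_, hwy⟩ => by
      rw [hwy]; exact mdot_mcross_self hμ (s y) (v y)) hvx hwx m
  -- expand in the frame `(s, v, w)`, whose coefficients come from the differentiated relations
  have expand := hF.mdot_expand hμ
  rw [← hwx_eq] at expand
  have hdv_ds : mdot μ (pdV m v x) (pdV m s x)
      = mdot μ (w x) (pdV m v x) * mdot μ (w x) (pdV m s x) := by
    rw [expand, hs_ds, hv_dv]; ring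
  have hdw_ds : mdot μ (pdV m w x) (pdV m s x)
      = -mdot μ (w x) (pdV m v x) * mdot μ (v x) (pdV m s x) := by
    rw [mdot_comm μ (pdV m v x)] at hvw
    rw [expand, hs_ds, hw_dw]
    linear_combination mdot μ (v x) (pdV m s x) * hvw
  rw [pdC_frameCoord hvx hwx hsm]
  simp only [frameCoord, hdv_ds, hdw_ds]
  push_cast
  linear_combination (mdot μ (w x) (pdV m v x) : ℂ) * (mdot μ (w x) (pdV m s x) : ℂ)
    * Complex.I_sq

theorem stmt10_general (μ ε : ℝ) (hμ : μ = 1 ∨ μ = -1)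
    (U : Set (Fin 3 → ℝ)) (hU : IsOpen U)
    (s v w : (Fin 3 → ℝ) → (Fin 3 → ℝ))
    (hs : ContDiffOn ℝ 2 s U) (hv : ContDiffOn ℝ 1 v U) (hw : ContDiffOn ℝ 1 w U)
    (h1 : ∀ x ∈ U, mdot μ (s x) (s x) = μ)
    (h2 : ∀ x ∈ U, mdot μ (v x) (v x) = 1)
    (h3 : ∀ x ∈ U, mdot μ (v x) (s x) = 0)
    (h4 : ∀ x ∈ U, w x = mcross μ (s x) (v x))
    (ψ : Fin 3 → (Fin 3 → ℝ) → ℂ)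
    (hψ : ∀ m x, ψ m x =
      (mdot μ (v x) (pdV m s x) : ℂ) + Complex.I * (mdot μ (w x) (pdV m s x) : ℂ))
    (A : Fin 3 → (Fin 3 → ℝ) → ℝ)
    (hA : ∀ m x, A m x = mdot μ (w x) (pdV m v x))
    (ζ1 ζ2 : (Fin 3 → ℝ) → ℝ)
    (hspin : ∀ x ∈ U,
      pdV 0 s x = mcross μ (s x) (pdV 1 (pdV 1 s) x + ε • pdV 2 (pdV 2 s) x)
        + ζ2 x • pdV 1 s x - (ε * ζ1 x) • pdV 2 s x) :
    ∀ x ∈ U,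
      ψ 0 x = Complex.I * (pdC 1 (ψ 1) x + Complex.I * (A 1 x : ℂ) * ψ 1 x)
        + Complex.I * (ε : ℂ) * (pdC 2 (ψ 2) x + Complex.I * (A 2 x : ℂ) * ψ 2 x)
        + (ζ2 x : ℂ) * ψ 1 x - (ε : ℂ) * (ζ1 x : ℂ) * ψ 2 x := by
  intro x hx
  have hμ2 : μ ^ 2 = 1 := by rcases hμ with rfl | rfl <;> norm_num
  have hUx : U ∈ 𝓝 x := hU.mem_nhds hx
  have hsx := (hs.differentiableOn (by norm_num)).differentiableAt hUx
  have hvx := (hv.differentiableOn one_ne_zero).differentiableAt hUx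
  have hwx := (hw.differentiableOn one_ne_zero).differentiableAt hUx
  have hframe : ∀ᶠ y in 𝓝 x, IsFrame μ (s y) (v y) :=
    eventually_of_mem hUx fun y hy => ⟨h1 y hy, h2 y hy, h3 y hy⟩
  have hψ' : ∀ m, ψ m = fun y => frameCoord μ (v y) (w y) (pdV m s y) := fun m => funext (hψ m)
  have hψx : ∀ m, ψ m x = frameCoord μ (v x) (w x) (pdV m s x) := fun m => hψ m x
  have hcov : ∀ m, pdC m (ψ m) x + Complex.I * (A m x : ℂ) * ψ m x
      = frameCoord μ (v x) (w x) (pdV m (pdV m s) x) := fun m => by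
    rw [hA, hψ' m]
    exact pdC_frameCoord_pdV_add_I_mul hμ2 hframe (eventually_of_mem hUx h4) hsx hvx hwx m
      (differentiableAt_pdV hU hs hx m)
  have hψ0 : ψ 0 x
      = Complex.I * frameCoord μ (v x) (w x) (pdV 1 (pdV 1 s) x + ε • pdV 2 (pdV 2 s) x)
        + ζ2 x * ψ 1 x - (ε * ζ1 x : ℝ) * ψ 2 x := by
    rw [hψx 0, hψx 1, hψx 2, hspin x hx, frameCoord_sub, frameCoord_add, frameCoord_smul,
      frameCoord_smul, h4 x hx, frameCoord_mcross hμ2 (h1 x hx) (h3 x hx)]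
  rw [hψ0, hcov 1, hcov 2, frameCoord_add, frameCoord_smul]
  push_cast
  ring

theorem stmt10 (μ ε : ℝ) (hμ : μ = 1 ∨ μ = -1) (hε : ε = 1 ∨ ε = -1)
    (U : Set (Fin 3 → ℝ)) (hU : IsOpen U)
    (s v w : (Fin 3 → ℝ) → (Fin 3 → ℝ))
    (hs : ContDiffOn ℝ 2 s U) (hv : ContDiffOn ℝ 1 v U) (hw : ContDiffOn ℝ 1 w U)
    (h1 : ∀ x ∈ U, mdot μ (s x) (s x) = μ)
    (h2 : ∀ x ∈ U, mdot μ (v x) (v x) = 1)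
    (h3 : ∀ x ∈ U, mdot μ (v x) (s x) = 0)
    (h4 : ∀ x ∈ U, w x = mcross μ (s x) (v x))
    (ψ : Fin 3 → (Fin 3 → ℝ) → ℂ)
    (hψ : ∀ m x, ψ m x =
      (mdot μ (v x) (pdV m s x) : ℂ) + Complex.I * (mdot μ (w x) (pdV m s x) : ℂ))
    (A : Fin 3 → (Fin 3 → ℝ) → ℝ)
    (hA : ∀ m x, A m x = mdot μ (w x) (pdV m v x))
    (ζ1 ζ2 : (Fin 3 → ℝ) → ℝ)
    (hspin : ∀ x ∈ U,
      pdV 0 s x = mcross μ (s x) (pdV 1 (pdV 1 s) x + ε • pdV 2 (pdV 2 s) x)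
        + ζ2 x • pdV 1 s x - (ε * ζ1 x) • pdV 2 s x) :
    ∀ x ∈ U,
      ψ 0 x = Complex.I * (pdC 1 (ψ 1) x + Complex.I * (A 1 x : ℂ) * ψ 1 x)
        + Complex.I * (ε : ℂ) * (pdC 2 (ψ 2) x + Complex.I * (A 2 x : ℂ) * ψ 2 x)
        + (ζ2 x : ℂ) * ψ 1 x - (ε : ℂ) * (ζ1 x : ℂ) * ψ 2 x :=
  stmt10_general μ ε hμ U hU s v w hs hv hw h1 h2 h3 h4 ψ hψ A hA ζ1 ζ2 hspin
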